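/- arXiv:1812.11254 — 2 statements merged into one kernel-verified Lean document; each statement's English description precedes it below -/
import Mathlib

section
/- Let V be a finite vertex set and let G and G' be simple graphs on V with E(G) ⊆ E(G'). Let C : V → Fin c be a proper coloring of G, and let S ⊆ V be a set of vertices such that every edge of G' that is not an edge of G has at least one endpoint in S (i.e., S is a vertex cover of the newly added edges). Then G' admits a proper coloring C' : V → Fin (c + |S|) such that C'(v) agrees with C(v) (under the canonical embedding Fin c ↪ Fin (c + |S|)) for every vertex v ∉ S. -/
/-!
Keep the old color on every vertex outside `S` and give each vertex of `S` a private new color.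
An edge of `G'` with both ends outside `S` is not new, hence an edge of `G`, where `C` is proper;
every other edge has an end carrying a color that no other vertex uses.
-/

namespace SimpleGraph

variable {V α : Type*} {G G' : SimpleGraph V}

def Coloring.recolorOn (C : G.Coloring α) (S : Set V) [DecidablePred (· ∈ S)]
    (hcov : ∀ u v : V, G'.Adj u v → ¬ G.Adj u v → u ∈ S ∨ v ∈ S) : G'.Coloring (α ⊕ S) :=
  Coloring.mk (fun v => if h : v ∈ S then .inr ⟨v, h⟩ else .inl (C v)) <| by
    intro u v huv
    by_cases hu : u ∈ S <;> by_cases hv : v ∈ S <;> simp only [hu, hv, dite_true, dite_false]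
    · simpa using G'.ne_of_adj huv
    · exact Sum.inr_ne_inl
    · exact Sum.inl_ne_inr
    · have hG : G.Adj u v := by_contra fun hnew => (hcov u v huv hnew).elim hu hv
      simpa using C.valid hG

theorem Coloring.recolorOn_of_notMem (C : G.Coloring α) (S : Set V) [DecidablePred (· ∈ S)]
    (hcov : ∀ u v : V, G'.Adj u v → ¬ G.Adj u v → u ∈ S ∨ v ∈ S) {v : V} (hv : v ∉ S) :
    C.recolorOn S hcov v = .inl (C v) :=
  dif_neg hv

end SimpleGraph

theorem dynamic_recoloring_general {V : Type*} (G G' : SimpleGraph V)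
    {c : ℕ} (C : G.Coloring (Fin c)) (S : Finset V)
    (hcov : ∀ u v : V, G'.Adj u v → ¬ G.Adj u v → u ∈ S ∨ v ∈ S) :
    ∃ C' : G'.Coloring (Fin (c + S.card)),
      ∀ v : V, v ∉ S → C' v = Fin.castAdd S.card (C v) := by
  classical
  let relabel : Fin c ⊕ (S : Set V) ≃ Fin (c + S.card) :=
    (Equiv.sumCongr (Equiv.refl _) S.equivFin).trans finSumFinEquiv
  refine ⟨G'.recolorOfEquiv relabel (C.recolorOn S hcov), fun v hv => ?_⟩
  simp [relabel, C.recolorOn_of_notMem S hcov hv]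

/-- Recoloring step: given `G ≤ G'`, a proper `c`-coloring `C` of `G`, and a set `S`
covering all newly added edges, `G'` has a proper `(c + |S|)`-coloring agreeing with
`C` outside `S`. -/
theorem dynamic_recoloring {V : Type*} [Fintype V] (G G' : SimpleGraph V)
    (hsub : G ≤ G') {c : ℕ} (C : G.Coloring (Fin c)) (S : Finset V)
    (hcov : ∀ u v : V, G'.Adj u v → ¬ G.Adj u v → u ∈ S ∨ v ∈ S) :
    ∃ C' : G'.Coloring (Fin (c + S.card)),
      ∀ v : V, v ∉ S → C' v = Fin.castAdd S.card (C v) :=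
  dynamic_recoloring_general G G' C S hcov
end

section
/- Let V be a finite vertex set and let G and G' be simple graphs on V with E(G) ⊆ E(G') and such that the number of edges of G' that are not edges of G is at most k. Let C : V → Fin c be a proper coloring of G. Then there exists a proper coloring C' : V → Fin (c + k) of G' such that C'(v) differs from C(v) (under the canonical embedding Fin c ↪ Fin (c + k)) for at most k vertices v. -/
/-!
Choose one endpoint of each new edge; this gives a set `s` of at most `k` vertices meeting every
edge of `G'` that is not an edge of `G`. Give the vertices of `s` pairwise distinct fresh colours
`c, …, c + k - 1` and keep the old colour elsewhere. An edge of `G'` with an endpoint in `s` is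
then properly coloured by freshness, and an edge avoiding `s` is an edge of `G`.
-/

open Finset

theorem Sym2.exists_finset_card_le_forall_exists_mem {V : Type*} [DecidableEq V]
    (T : Finset (Sym2 V)) : ∃ s : Finset V, #s ≤ #T ∧ ∀ e ∈ T, ∃ v ∈ s, v ∈ e :=
  ⟨T.image fun e => e.out.1, card_image_le,
    fun e he => ⟨e.out.1, mem_image_of_mem _ he, e.out_fst_mem⟩⟩

namespace SimpleGraph.Coloring

variable {V α β : Type*} {G G' : SimpleGraph V}

def recolorOn_s5 (C : G.Coloring α) (s : Set V) [DecidablePred (· ∈ s)] (f : s ↪ β)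
    (hs : ∀ ⦃u v⦄, G'.Adj u v → u ∉ s → v ∉ s → G.Adj u v) : G'.Coloring (α ⊕ β) :=
  Coloring.mk (fun v => if h : v ∈ s then .inr (f ⟨v, h⟩) else .inl (C v)) <| by
    intro u v huv
    by_cases hu : u ∈ s <;> by_cases hv : v ∈ s <;> simp only [hu, hv, dite_true, dite_false]
    · simpa using huv.ne
    · exact Sum.inr_ne_inl
    · exact Sum.inl_ne_inr
    · simpa using C.valid (hs huv hu hv)

theorem recolorOn_apply_of_notMem {s : Set V} [DecidablePred (· ∈ s)] (C : G.Coloring α)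
    (f : s ↪ β) (hs : ∀ ⦃u v⦄, G'.Adj u v → u ∉ s → v ∉ s → G.Adj u v)
    {v : V} (hv : v ∉ s) : C.recolorOn_s5 s f hs v = .inl (C v) :=
  dif_neg hv

end SimpleGraph.Coloring

theorem dynamic_coloring_hamming_general {V : Type*} [Fintype V]
    (G G' : SimpleGraph V) (k : ℕ)
    (hk : (G'.edgeSet \ G.edgeSet).ncard ≤ k) {c : ℕ} (C : G.Coloring (Fin c)) :
    ∃ C' : G'.Coloring (Fin (c + k)),
      (Finset.univ.filter fun v : V => C' v ≠ Fin.castAdd k (C v)).card ≤ k := by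
  classical
  obtain ⟨s, hsk, hcover⟩ :=
    Sym2.exists_finset_card_le_forall_exists_mem (G'.edgeSet \ G.edgeSet).toFinset
  rw [← Set.ncard_eq_toFinset_card'] at hsk
  have hs : ∀ ⦃u v⦄, G'.Adj u v → u ∉ (s : Set V) → v ∉ (s : Set V) → G.Adj u v := by
    intro u v huv hu hv
    by_contra hG
    obtain ⟨w, hw, hwe⟩ := hcover s(u, v) (by simpa using And.intro huv hG)
    rcases Sym2.mem_iff.mp hwe with rfl | rfl <;> simp_all
  obtain ⟨f⟩ : Nonempty ((s : Set V) ↪ Fin k) :=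
    Function.Embedding.nonempty_of_card_le (by simpa using hsk.trans hk)
  refine ⟨G'.recolorOfEmbedding finSumFinEquiv.toEmbedding (C.recolorOn_s5 s f hs),
    (card_le_card fun v hv => ?_).trans (hsk.trans hk)⟩
  by_contra hvs
  simp [C.recolorOn_apply_of_notMem f hs hvs] at hv

/-- If `G'` is obtained from `G` by adding at most `k` edges, then any proper
`c`-coloring of `G` can be turned into a proper `(c + k)`-coloring of `G'` by
recoloring at most `k` vertices. -/
theorem dynamic_coloring_hamming {V : Type*} [Fintype V] [DecidableEq V]
    (G G' : SimpleGraph V) (hsub : G ≤ G') (k : ℕ)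
    (hk : (G'.edgeSet \ G.edgeSet).ncard ≤ k) {c : ℕ} (C : G.Coloring (Fin c)) :
    ∃ C' : G'.Coloring (Fin (c + k)),
      (Finset.univ.filter fun v : V => C' v ≠ Fin.castAdd k (C v)).card ≤ k :=
  dynamic_coloring_hamming_general G G' k hk C
end
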